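/- Let S ⊆ {-1,0,1}² be a step set with nonnegative weights p_{u,v} summing to 1 and zero drift, with second moments σ₁₁, σ₁₂, σ₂₂ satisfying σ₁₁ > 0 and δ := σ₁₁σ₂₂ − σ₁₂² > 0, and with ã(1) = Σ_v p_{−1,v} > 0. Write the kernel as K(x,y) = ã(y)x² + b̃(y)x + c̃(y), a quadratic polynomial in x. Set c₊ = (−σ₁₂ + i√δ)/σ₁₁ and c₋ = (−σ₁₂ − i√δ)/σ₁₁ in ℂ. Then for every real y there exist ε > 0, C > 0, and functions r₊, r₋ : (0,ε) → ℂ such that for every μ ∈ (0,ε): r₊(μ) and r₋(μ) are precisely the two complex roots (with multiplicity) of the quadratic equation ã(e^{−μy})X² + b̃(e^{−μy})X + c̃(e^{−μy}) = 0, and |r₊(μ) − 1 + c₊·μ·y| ≤ Cμ² and |r₋(μ) − 1 + c₋·μ·y| ≤ Cμ². In other words, the roots X_±(e^{−μy}) of K(·, e^{−μy}) satisfy X_±(e^{−μy}) = 1 − c_± μy + O(μ²) as μ → 0⁺. -/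

import Mathlib

/-!
Write `t = e^{-μy}` and substitute `X = 1 + (1 - t) Z`. Zero drift makes `1` a root of
`K(·, 1)` of multiplicity two, and in fact `K(1 + (1 - t) Z, t) = (1 - t)² q_t(Z)` for a real
quadratic `q_t` whose coefficients are polynomial in `t`. At `t = 1`,
`q_1(Z) = (σ₁₁ Z² - 2 σ₁₂ Z + σ₂₂) / 2` has the two simple roots `(σ₁₂ ± i√δ) / σ₁₁ = -c_∓`,
so the roots of `q_t` are differentiable functions of `μ` near `0`. Hence
`X_± = 1 + (1 - e^{-μy}) (-c_± + O(μ)) = 1 - c_± μ y + O(μ²)`.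
-/

open Finset

/-- `ã(y) = Σ_v p (−1) v · y^{1−v}`, the coefficient of `x²` in the kernel `K(x,y)`. -/
noncomputable def coefA (p : ℤ → ℤ → ℝ) : ℝ → ℝ :=
  fun y => ∑ v ∈ ({-1, 0, 1} : Finset ℤ), p (-1) v * y ^ (1 - v).toNat

/-- `b̃(y) = Σ_v p 0 v · y^{1−v} − y`, the coefficient of `x` in the kernel `K(x,y)`. -/
noncomputable def coefB (p : ℤ → ℤ → ℝ) : ℝ → ℝ :=
  fun y => (∑ v ∈ ({-1, 0, 1} : Finset ℤ), p 0 v * y ^ (1 - v).toNat) - y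

/-- `c̃(y) = Σ_v p 1 v · y^{1−v}`, the constant coefficient (in `x`) of the kernel `K(x,y)`. -/
noncomputable def coefC (p : ℤ → ℤ → ℝ) : ℝ → ℝ :=
  fun y => ∑ v ∈ ({-1, 0, 1} : Finset ℤ), p 1 v * y ^ (1 - v).toNat

open Complex Filter Asymptotics Topology

-- For `s = ±1` these are the roots of `a X² + b X + c` only when `b² ≤ 4ac`: otherwise the
-- real square root returns its junk value `0`.
noncomputable def quadRoot (a b c s : ℝ) : ℂ := (-b + s * I * √(4 * a * c - b ^ 2)) / (2 * a)

lemma quadRoot_add {a : ℝ} (b c : ℝ) (ha : a ≠ 0) :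
    a * (quadRoot a b c 1 + quadRoot a b c (-1)) = -b := by
  have ha' : (a : ℂ) ≠ 0 := ofReal_ne_zero.2 ha
  simp only [quadRoot]
  field_simp
  push_cast
  ring

lemma quadRoot_mul {a b c : ℝ} (ha : a ≠ 0) (hd : 0 ≤ 4 * a * c - b ^ 2) :
    a * (quadRoot a b c 1 * quadRoot a b c (-1)) = c := by
  have ha' : (a : ℂ) ≠ 0 := ofReal_ne_zero.2 ha
  have hs : ((√(4 * a * c - b ^ 2) : ℝ) : ℂ) ^ 2 = 4 * a * c - b ^ 2 := by
    rw [← ofReal_pow, Real.sq_sqrt hd]; push_cast; ring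
  simp only [quadRoot]
  push_cast
  rw [div_mul_div_comm, mul_div_assoc', div_eq_iff (by simpa using ha')]
  linear_combination (-(a:ℂ)) * ((√(4 * a * c - b ^ 2) : ℝ) : ℂ) ^ 2 * I_sq + a * hs

lemma DifferentiableAt.quadRoot {a b c : ℝ → ℝ} {x : ℝ} (s : ℝ) (ha : DifferentiableAt ℝ a x)
    (hb : DifferentiableAt ℝ b x) (hc : DifferentiableAt ℝ c x) (ha0 : a x ≠ 0)
    (hd : 0 < 4 * a x * c x - b x ^ 2) :
    DifferentiableAt ℝ (fun μ => _root_.quadRoot (a μ) (b μ) (c μ) s) x := by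
  have hsq : DifferentiableAt ℝ (fun μ => √(4 * a μ * c μ - b μ ^ 2)) x :=
    (by fun_prop : DifferentiableAt ℝ (fun μ => 4 * a μ * c μ - b μ ^ 2) x).sqrt hd.ne'
  have hre : ∀ {f : ℝ → ℝ}, DifferentiableAt ℝ f x → DifferentiableAt ℝ (fun μ => (f μ : ℂ)) x :=
    fun hf => (hf.hasDerivAt.ofReal_comp).differentiableAt
  refine ((hre hb).neg.add ((differentiableAt_const _).mul (hre hsq))).div
    ((differentiableAt_const _).mul (hre ha)) ?_
  exact mul_ne_zero two_ne_zero (ofReal_ne_zero.2 ha0)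

lemma eventually_ne_zero_and_discrim_nonpos {a b c : ℝ → ℝ} {x : ℝ}
    (ha : ContinuousAt a x) (hb : ContinuousAt b x) (hc : ContinuousAt c x) (ha0 : a x ≠ 0)
    (hd : 0 < 4 * a x * c x - b x ^ 2) :
    ∀ᶠ μ in 𝓝 x, a μ ≠ 0 ∧ 0 ≤ 4 * a μ * c μ - b μ ^ 2 :=
  (ha.eventually_ne ha0).and ((((continuousAt_const.mul ha).mul hc).sub (hb.pow 2)).eventually
    (lt_mem_nhds hd) |>.mono fun _ => le_of_lt)

lemma isBigO_one_sub_exp_neg_mul (y : ℝ) :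
    (fun μ : ℝ => 1 - Real.exp (-μ * y) - μ * y) =O[𝓝 0] (fun μ => μ ^ 2) := by
  have hlin : Tendsto (fun μ : ℝ => -μ * y) (𝓝 0) (𝓝 0) :=
    Continuous.tendsto' (by fun_prop) 0 0 (by simp)
  have hsq : ((fun x : ℝ => x ^ 2) ∘ fun μ => -μ * y) =O[𝓝 0] (fun μ => μ ^ 2) :=
    ((isBigO_refl _ _).const_mul_left (y ^ 2)).congr_left
      (fun μ => by simp only [Function.comp_apply]; ring)
  refine (((Real.exp_sub_sum_range_isBigO_pow 2).comp_tendsto hlin).neg_left.trans hsq).congr_left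
    (fun μ => ?_)
  simp only [Function.comp_apply, Finset.sum_range_succ, Finset.sum_range_zero, Nat.factorial,
    Nat.cast_one, pow_zero, pow_one, div_one]
  ring

lemma isBigO_mul_sub_of_differentiableAt {h : ℝ → ℝ} {Z : ℝ → ℂ} {y : ℝ}
    (hh : (fun μ => h μ - μ * y) =O[𝓝 0] (fun μ => μ ^ 2)) (hZ : DifferentiableAt ℝ Z 0) :
    (fun μ => (h μ : ℂ) * Z μ - Z 0 * μ * y) =O[𝓝 0] (fun μ => μ ^ 2) := by
  have hh1 : h =O[𝓝 0] (fun μ => μ) := by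
    have hsq : (fun μ : ℝ => μ ^ 2) =O[𝓝 0] (fun μ => μ) := by
      simpa using (isLittleO_pow_pow (𝕜 := ℝ) one_lt_two).isBigO
    exact ((hh.trans hsq).add ((isBigO_refl _ _).const_mul_left y)).congr_left
      (fun μ => by ring)
  have hZ1 : (fun μ => Z μ - Z 0) =O[𝓝 0] (fun μ => μ) := by simpa using hZ.isBigO_sub
  have hmain := ((isBigO_ofReal_left.2 hh1).mul hZ1).congr_right (g₂ := fun μ => μ ^ 2)
    (fun μ => by ring)
  refine (hmain.add ((isBigO_ofReal_left.2 hh).const_mul_left (Z 0))).congr_left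
    (fun μ => by push_cast; ring)

lemma sum_neg_one_zero_one {M : Type*} [AddCommMonoid M] (f : ℤ → M) :
    ∑ v ∈ ({-1, 0, 1} : Finset ℤ), f v = f (-1) + f 0 + f 1 := by
  rw [sum_insert (by decide), sum_insert (by decide), sum_singleton, add_assoc]

/-- For a zero-drift walk, `K(1 + (1 - t) Z, t) = (1 - t)² (ã(t) Z² + rescaledCoefB p t · Z +
rescaledCoefC p)`. -/
def rescaledCoefB (p : ℤ → ℤ → ℝ) (t : ℝ) : ℝ :=
  2 * p (-1) 1 + p 0 1 - (2 * p (-1) (-1) + p 0 (-1)) * t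

def rescaledCoefC (p : ℤ → ℤ → ℝ) : ℝ := p (-1) (-1) + p 0 (-1) + p 1 (-1)

section Kernel

variable {p : ℤ → ℤ → ℝ}

lemma coefA_eq (t : ℝ) : coefA p t = p (-1) (-1) * t ^ 2 + p (-1) 0 * t + p (-1) 1 := by
  rw [coefA, sum_neg_one_zero_one]
  norm_num [show (2 : ℤ).toNat = 2 from rfl]

lemma coefB_eq (t : ℝ) : coefB p t = p 0 (-1) * t ^ 2 + p 0 0 * t + p 0 1 - t := by
  rw [coefB, sum_neg_one_zero_one]
  norm_num [show (2 : ℤ).toNat = 2 from rfl]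

lemma coefC_eq (t : ℝ) : coefC p t = p 1 (-1) * t ^ 2 + p 1 0 * t + p 1 1 := by
  rw [coefC, sum_neg_one_zero_one]
  norm_num [show (2 : ℤ).toNat = 2 from rfl]

lemma two_mul_coefA_add_coefB
    (hp1 : ∑ u ∈ ({-1, 0, 1} : Finset ℤ), ∑ v ∈ ({-1, 0, 1} : Finset ℤ), p u v = 1)
    (hdrift1 : ∑ u ∈ ({-1, 0, 1} : Finset ℤ), ∑ v ∈ ({-1, 0, 1} : Finset ℤ),
      (u : ℝ) * p u v = 0) (t : ℝ) :
    2 * coefA p t + coefB p t = (1 - t) * rescaledCoefB p t := by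
  simp only [sum_neg_one_zero_one] at hp1 hdrift1
  norm_num at hdrift1
  rw [coefA_eq, coefB_eq, rescaledCoefB]
  linear_combination t * (hp1 - hdrift1)

lemma coefA_add_coefB_add_coefC
    (hp1 : ∑ u ∈ ({-1, 0, 1} : Finset ℤ), ∑ v ∈ ({-1, 0, 1} : Finset ℤ), p u v = 1)
    (hdrift2 : ∑ u ∈ ({-1, 0, 1} : Finset ℤ), ∑ v ∈ ({-1, 0, 1} : Finset ℤ),
      (v : ℝ) * p u v = 0) (t : ℝ) :
    coefA p t + coefB p t + coefC p t = (1 - t) ^ 2 * rescaledCoefC p := by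
  simp only [sum_neg_one_zero_one] at hp1 hdrift2
  norm_num at hdrift2
  rw [coefA_eq, coefB_eq, coefC_eq, rescaledCoefC]
  linear_combination t * (hp1 - hdrift2) + hdrift2

lemma coefA_one
    (hdrift1 : ∑ u ∈ ({-1, 0, 1} : Finset ℤ), ∑ v ∈ ({-1, 0, 1} : Finset ℤ),
      (u : ℝ) * p u v = 0) {σ₁₁ : ℝ}
    (hσ₁₁ : σ₁₁ = ∑ u ∈ ({-1, 0, 1} : Finset ℤ), ∑ v ∈ ({-1, 0, 1} : Finset ℤ),
      (u : ℝ) ^ 2 * p u v) :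
    coefA p 1 = σ₁₁ / 2 := by
  simp only [sum_neg_one_zero_one] at hdrift1 hσ₁₁
  norm_num at hdrift1 hσ₁₁
  rw [coefA_eq]
  linear_combination -hσ₁₁ / 2 - hdrift1 / 2

lemma rescaledCoefB_one
    (hdrift2 : ∑ u ∈ ({-1, 0, 1} : Finset ℤ), ∑ v ∈ ({-1, 0, 1} : Finset ℤ),
      (v : ℝ) * p u v = 0) {σ₁₂ : ℝ}
    (hσ₁₂ : σ₁₂ = ∑ u ∈ ({-1, 0, 1} : Finset ℤ), ∑ v ∈ ({-1, 0, 1} : Finset ℤ),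
      (u : ℝ) * (v : ℝ) * p u v) :
    rescaledCoefB p 1 = -σ₁₂ := by
  simp only [sum_neg_one_zero_one] at hdrift2 hσ₁₂
  norm_num at hdrift2 hσ₁₂
  rw [rescaledCoefB]
  linear_combination hσ₁₂ + hdrift2

lemma rescaledCoefC_eq
    (hdrift2 : ∑ u ∈ ({-1, 0, 1} : Finset ℤ), ∑ v ∈ ({-1, 0, 1} : Finset ℤ),
      (v : ℝ) * p u v = 0) {σ₂₂ : ℝ}
    (hσ₂₂ : σ₂₂ = ∑ u ∈ ({-1, 0, 1} : Finset ℤ), ∑ v ∈ ({-1, 0, 1} : Finset ℤ),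
      (v : ℝ) ^ 2 * p u v) :
    rescaledCoefC p = σ₂₂ / 2 := by
  simp only [sum_neg_one_zero_one] at hdrift2 hσ₂₂
  norm_num at hdrift2 hσ₂₂
  rw [rescaledCoefC]
  linear_combination -hσ₂₂ / 2 - hdrift2 / 2

lemma kernel_eq_mul_sub_mul_sub
    (hp1 : ∑ u ∈ ({-1, 0, 1} : Finset ℤ), ∑ v ∈ ({-1, 0, 1} : Finset ℤ), p u v = 1)
    (hdrift1 : ∑ u ∈ ({-1, 0, 1} : Finset ℤ), ∑ v ∈ ({-1, 0, 1} : Finset ℤ),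
      (u : ℝ) * p u v = 0)
    (hdrift2 : ∑ u ∈ ({-1, 0, 1} : Finset ℤ), ∑ v ∈ ({-1, 0, 1} : Finset ℤ),
      (v : ℝ) * p u v = 0)
    {t : ℝ} (hA : coefA p t ≠ 0)
    (hd : 0 ≤ 4 * coefA p t * rescaledCoefC p - rescaledCoefB p t ^ 2) (X : ℂ) :
    (coefA p t : ℂ) * X ^ 2 + (coefB p t : ℂ) * X + (coefC p t : ℂ) =
      coefA p t *
        (X - (1 + (1 - t : ℝ) * quadRoot (coefA p t) (rescaledCoefB p t) (rescaledCoefC p) (-1))) *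
        (X - (1 + (1 - t : ℝ) * quadRoot (coefA p t) (rescaledCoefB p t) (rescaledCoefC p) 1)) := by
  have hsum := quadRoot_add (rescaledCoefB p t) (rescaledCoefC p) hA
  have hprod := quadRoot_mul hA hd
  have hlin : (2 * coefA p t + coefB p t : ℂ) = (1 - t) * rescaledCoefB p t := by
    exact_mod_cast two_mul_coefA_add_coefB hp1 hdrift1 t
  have hconst : (coefA p t + coefB p t + coefC p t : ℂ) = (1 - t) ^ 2 * rescaledCoefC p := by
    exact_mod_cast coefA_add_coefB_add_coefC hp1 hdrift2 t
  push_cast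
  linear_combination (X - 1) * hlin + hconst + (1 - t) * (X - 1) * hsum - (1 - t) ^ 2 * hprod

end Kernel

lemma exists_forall_Ioo_of_isBigO_sq {P : ℝ → Prop} {f g : ℝ → ℂ} (hP : ∀ᶠ μ in 𝓝 0, P μ)
    (hf : f =O[𝓝 0] (fun μ => μ ^ 2)) (hg : g =O[𝓝 0] (fun μ => μ ^ 2)) :
    ∃ ε > (0 : ℝ), ∃ C > (0 : ℝ), ∀ μ ∈ Set.Ioo (0 : ℝ) ε,
      P μ ∧ ‖f μ‖ ≤ C * μ ^ 2 ∧ ‖g μ‖ ≤ C * μ ^ 2 := by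
  obtain ⟨c₁, hc₁, hf⟩ := hf.exists_pos
  obtain ⟨c₂, hc₂, hg⟩ := hg.exists_pos
  have hev : ∀ᶠ μ in 𝓝 0, P μ ∧ ‖f μ‖ ≤ (c₁ + c₂) * μ ^ 2 ∧ ‖g μ‖ ≤ (c₁ + c₂) * μ ^ 2 := by
    filter_upwards [hP, hf.bound, hg.bound] with μ hPμ hfμ hgμ
    rw [norm_pow, Real.norm_eq_abs, sq_abs] at hfμ hgμ
    exact ⟨hPμ, by nlinarith [sq_nonneg μ], by nlinarith [sq_nonneg μ]⟩
  obtain ⟨ε, hε, hball⟩ := Metric.eventually_nhds_iff.1 hev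
  refine ⟨ε, hε, c₁ + c₂, by positivity, fun μ hμ => hball ?_⟩
  rw [Real.dist_eq, sub_zero, abs_of_pos hμ.1]
  exact hμ.2

theorem kernel_roots_expansion_general
    (p : ℤ → ℤ → ℝ)
    (hp1 : ∑ u ∈ ({-1, 0, 1} : Finset ℤ), ∑ v ∈ ({-1, 0, 1} : Finset ℤ), p u v = 1)
    (hdrift1 : ∑ u ∈ ({-1, 0, 1} : Finset ℤ), ∑ v ∈ ({-1, 0, 1} : Finset ℤ),
      (u : ℝ) * p u v = 0)
    (hdrift2 : ∑ u ∈ ({-1, 0, 1} : Finset ℤ), ∑ v ∈ ({-1, 0, 1} : Finset ℤ),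
      (v : ℝ) * p u v = 0)
    (σ₁₁ σ₁₂ σ₂₂ δ : ℝ)
    (hσ₁₁ : σ₁₁ = ∑ u ∈ ({-1, 0, 1} : Finset ℤ), ∑ v ∈ ({-1, 0, 1} : Finset ℤ),
      (u : ℝ) ^ 2 * p u v)
    (hσ₁₂ : σ₁₂ = ∑ u ∈ ({-1, 0, 1} : Finset ℤ), ∑ v ∈ ({-1, 0, 1} : Finset ℤ),
      (u : ℝ) * (v : ℝ) * p u v)
    (hσ₂₂ : σ₂₂ = ∑ u ∈ ({-1, 0, 1} : Finset ℤ), ∑ v ∈ ({-1, 0, 1} : Finset ℤ),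
      (v : ℝ) ^ 2 * p u v)
    (hσ₁₁pos : 0 < σ₁₁) (hδ : δ = σ₁₁ * σ₂₂ - σ₁₂ ^ 2) (hδpos : 0 < δ)
    (cp cm : ℂ)
    (hcp : cp = (-(σ₁₂ : ℂ) + Complex.I * Real.sqrt δ) / (σ₁₁ : ℂ))
    (hcm : cm = (-(σ₁₂ : ℂ) - Complex.I * Real.sqrt δ) / (σ₁₁ : ℂ)) :
    ∀ y : ℝ, ∃ ε > (0 : ℝ), ∃ C > (0 : ℝ), ∃ rp rm : ℝ → ℂ,
      ∀ μ ∈ Set.Ioo (0 : ℝ) ε,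
        (∀ X : ℂ,
          (coefA p (Real.exp (-μ * y)) : ℂ) * X ^ 2 +
              (coefB p (Real.exp (-μ * y)) : ℂ) * X +
              (coefC p (Real.exp (-μ * y)) : ℂ) =
            (coefA p (Real.exp (-μ * y)) : ℂ) * (X - rp μ) * (X - rm μ)) ∧
        ‖rp μ - 1 + cp * (μ : ℂ) * (y : ℂ)‖ ≤ C * μ ^ 2 ∧
        ‖rm μ - 1 + cm * (μ : ℂ) * (y : ℂ)‖ ≤ C * μ ^ 2 := by
  intro y
  set a : ℝ → ℝ := fun μ => coefA p (Real.exp (-μ * y))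
  set b : ℝ → ℝ := fun μ => rescaledCoefB p (Real.exp (-μ * y))
  set Z : ℝ → ℝ → ℂ := fun s μ => quadRoot (a μ) (b μ) (rescaledCoefC p) s
  have ha0 : a 0 = σ₁₁ / 2 := by simp [a, coefA_one hdrift1 hσ₁₁]
  have hb0 : b 0 = -σ₁₂ := by simp [b, rescaledCoefB_one hdrift2 hσ₁₂]
  have hdisc0 : 4 * a 0 * rescaledCoefC p - b 0 ^ 2 = δ := by
    rw [ha0, hb0, rescaledCoefC_eq hdrift2 hσ₂₂, hδ]; ring
  have ha0' : a 0 ≠ 0 := by rw [ha0]; exact (half_pos hσ₁₁pos).ne'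
  have ha : Differentiable ℝ a := by simp only [a, coefA_eq]; fun_prop
  have hb : Differentiable ℝ b := by simp only [b, rescaledCoefB]; fun_prop
  have hZ : ∀ s, DifferentiableAt ℝ (Z s) 0 := fun s =>
    ha.differentiableAt.quadRoot s hb.differentiableAt (differentiableAt_const _) ha0'
      (hdisc0 ▸ hδpos)
  have hZ0 : ∀ s, Z s 0 = (σ₁₂ + s * I * √δ) / σ₁₁ := fun s => by
    change quadRoot (a 0) (b 0) (rescaledCoefC p) s = _
    rw [quadRoot, hdisc0, ha0, hb0]; push_cast; ring
  have hroots := eventually_ne_zero_and_discrim_nonpos ha.continuous.continuousAt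
    hb.continuous.continuousAt continuousAt_const ha0' (hdisc0 ▸ hδpos)
  set rp : ℝ → ℂ := fun μ => 1 + (1 - Real.exp (-μ * y) : ℝ) * Z (-1) μ
  set rm : ℝ → ℂ := fun μ => 1 + (1 - Real.exp (-μ * y) : ℝ) * Z 1 μ
  have hrp : (fun μ => rp μ - 1 + cp * μ * y) =O[𝓝 0] (fun μ => μ ^ 2) :=
    (isBigO_mul_sub_of_differentiableAt (isBigO_one_sub_exp_neg_mul y) (hZ (-1))).congr_left
      (fun μ => by simp only [rp]; rw [hZ0, hcp]; push_cast; ring)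
  have hrm : (fun μ => rm μ - 1 + cm * μ * y) =O[𝓝 0] (fun μ => μ ^ 2) :=
    (isBigO_mul_sub_of_differentiableAt (isBigO_one_sub_exp_neg_mul y) (hZ 1)).congr_left
      (fun μ => by simp only [rm]; rw [hZ0, hcm]; push_cast; ring)
  obtain ⟨ε, hε, C, hC, hbound⟩ := exists_forall_Ioo_of_isBigO_sq hroots hrp hrm
  refine ⟨ε, hε, C, hC, rp, rm, fun μ hμ => ?_⟩
  obtain ⟨⟨hA, hd⟩, hrpμ, hrmμ⟩ := hbound μ hμ
  exact ⟨kernel_eq_mul_sub_mul_sub hp1 hdrift1 hdrift2 hA hd, hrpμ, hrmμ⟩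

/-- For a zero-drift walk with weights `p`, `σ₁₁ > 0`, `δ = σ₁₁σ₂₂ − σ₁₂² > 0` and
`ã(1) > 0`, the two roots `X_±(e^{−μy})` of the kernel `K(·, e^{−μy}) =
ã(e^{−μy})X² + b̃(e^{−μy})X + c̃(e^{−μy})` satisfy `X_±(e^{−μy}) = 1 − c_± μy + O(μ²)` as
`μ → 0⁺`, where `c_± = (−σ₁₂ ± i√δ)/σ₁₁`. -/
theorem kernel_roots_expansion
    (p : ℤ → ℤ → ℝ) (hp0 : ∀ u v : ℤ, 0 ≤ p u v)
    (hp1 : ∑ u ∈ ({-1, 0, 1} : Finset ℤ), ∑ v ∈ ({-1, 0, 1} : Finset ℤ), p u v = 1)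
    (hdrift1 : ∑ u ∈ ({-1, 0, 1} : Finset ℤ), ∑ v ∈ ({-1, 0, 1} : Finset ℤ),
      (u : ℝ) * p u v = 0)
    (hdrift2 : ∑ u ∈ ({-1, 0, 1} : Finset ℤ), ∑ v ∈ ({-1, 0, 1} : Finset ℤ),
      (v : ℝ) * p u v = 0)
    (σ₁₁ σ₁₂ σ₂₂ δ : ℝ)
    (hσ₁₁ : σ₁₁ = ∑ u ∈ ({-1, 0, 1} : Finset ℤ), ∑ v ∈ ({-1, 0, 1} : Finset ℤ),
      (u : ℝ) ^ 2 * p u v)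
    (hσ₁₂ : σ₁₂ = ∑ u ∈ ({-1, 0, 1} : Finset ℤ), ∑ v ∈ ({-1, 0, 1} : Finset ℤ),
      (u : ℝ) * (v : ℝ) * p u v)
    (hσ₂₂ : σ₂₂ = ∑ u ∈ ({-1, 0, 1} : Finset ℤ), ∑ v ∈ ({-1, 0, 1} : Finset ℤ),
      (v : ℝ) ^ 2 * p u v)
    (hσ₁₁pos : 0 < σ₁₁) (hδ : δ = σ₁₁ * σ₂₂ - σ₁₂ ^ 2) (hδpos : 0 < δ)
    (hatil1 : 0 < ∑ v ∈ ({-1, 0, 1} : Finset ℤ), p (-1) v)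
    (cp cm : ℂ)
    (hcp : cp = (-(σ₁₂ : ℂ) + Complex.I * Real.sqrt δ) / (σ₁₁ : ℂ))
    (hcm : cm = (-(σ₁₂ : ℂ) - Complex.I * Real.sqrt δ) / (σ₁₁ : ℂ)) :
    ∀ y : ℝ, ∃ ε > (0 : ℝ), ∃ C > (0 : ℝ), ∃ rp rm : ℝ → ℂ,
      ∀ μ ∈ Set.Ioo (0 : ℝ) ε,
        (∀ X : ℂ,
          (coefA p (Real.exp (-μ * y)) : ℂ) * X ^ 2 +
              (coefB p (Real.exp (-μ * y)) : ℂ) * X +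
              (coefC p (Real.exp (-μ * y)) : ℂ) =
            (coefA p (Real.exp (-μ * y)) : ℂ) * (X - rp μ) * (X - rm μ)) ∧
        ‖rp μ - 1 + cp * (μ : ℂ) * (y : ℂ)‖ ≤ C * μ ^ 2 ∧
        ‖rm μ - 1 + cm * (μ : ℂ) * (y : ℂ)‖ ≤ C * μ ^ 2 :=
  kernel_roots_expansion_general p hp1 hdrift1 hdrift2 σ₁₁ σ₁₂ σ₂₂ δ hσ₁₁ hσ₁₂ hσ₂₂ hσ₁₁pos hδ hδpos
    cp cm hcp hcm
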